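/- arXiv:1809.08574 — 2 statements merged into one kernel-verified Lean document; each statement's English description precedes it below -/
import Mathlib

section
/- Let $n \geq 4$, $k \geq 2$, $d \geq 1$ be integers with $2 \leq k \leq n-1$. There exist rational numbers $x,y,z,w,u$ with $0 \leq x,y,z,w,u < 1$ satisfying $z - u < 1$, $y - dx + dz < k+1-(n-k)d$, $x - y - z + w < n - 2k + 1$, and $y - w + u < k - 1$, if and only if either ($d = 1$ and $n \in \{2k-2, 2k-1, 2k, 2k+1\}$) or $(n,k,d) \in \{(4,2,2), (4,3,2), (5,3,2)\}$. -/
/-!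
Evaluating the inequalities at the extreme values of the coefficients gives `(n - k - 1) d < k + 1`
and `2k - 3 < n`; adding `d` times the `x - y - z + w` inequality to the `y - d x + d z` one, in
which `(1 - d) y ≥ 1 - d`, gives `(k - 2) d < k`. Over the integers these three bounds leave only the listed triples, and
for each of those an explicit boundary is exhibited.
-/

/-- `Δ = x H₀ + y L₀ + z E + w F + u D` makes `(X̃, Δ)` log Fano (Lemma 4.4). -/
def LogFanoCoeffs (n k d x y z w u : ℚ) : Prop :=
  (0 ≤ x ∧ x < 1) ∧ (0 ≤ y ∧ y < 1) ∧ (0 ≤ z ∧ z < 1) ∧ (0 ≤ w ∧ w < 1) ∧ (0 ≤ u ∧ u < 1) ∧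
    z - u < 1 ∧
    y - d * x + d * z < k + 1 - (n - k) * d ∧
    x - y - z + w < n - 2 * k + 1 ∧
    y - w + u < k - 1

def IsLogFanoTriple (n k d : ℤ) : Prop :=
  (d = 1 ∧ (n = 2 * k - 2 ∨ n = 2 * k - 1 ∨ n = 2 * k ∨ n = 2 * k + 1)) ∨
    (n = 4 ∧ k = 2 ∧ d = 2) ∨ (n = 4 ∧ k = 3 ∧ d = 2) ∨ (n = 5 ∧ k = 3 ∧ d = 2)

namespace LogFanoCoeffs

variable {n k d x y z w u : ℚ}

theorem sub_sub_one_mul_lt_add_one (h : LogFanoCoeffs n k d x y z w u) (hd : 0 ≤ d) :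
    (n - k - 1) * d < k + 1 := by
  obtain ⟨⟨-, hx⟩, ⟨hy, -⟩, ⟨hz, -⟩, -, -, -, hB, -⟩ := h
  nlinarith [mul_le_mul_of_nonneg_left hx.le hd, mul_nonneg hd hz]

theorem two_mul_sub_three_lt (h : LogFanoCoeffs n k d x y z w u) : 2 * k - 3 < n := by
  obtain ⟨⟨hx, -⟩, ⟨-, hy⟩, ⟨-, hz⟩, ⟨hw, -⟩, -, -, -, hC, -⟩ := h
  linarith

theorem sub_two_mul_lt (h : LogFanoCoeffs n k d x y z w u) (hd : 1 ≤ d) : (k - 2) * d < k := by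
  obtain ⟨-, ⟨-, hy⟩, -, ⟨hw, -⟩, -, -, hB, hC, -⟩ := h
  nlinarith [mul_lt_mul_of_pos_left hC (by linarith : (0 : ℚ) < d),
    mul_nonneg (by linarith : (0 : ℚ) ≤ d - 1) (by linarith : (0 : ℚ) ≤ 1 - y),
    mul_nonneg (by linarith : (0 : ℚ) ≤ d) hw]

end LogFanoCoeffs

theorem isLogFanoTriple_of_bounds {n k d : ℤ} (hn : 4 ≤ n) (hd : 1 ≤ d)
    (h₁ : (n - k - 1) * d < k + 1) (h₂ : 2 * k - 3 < n) (h₃ : (k - 2) * d < k) :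
    IsLogFanoTriple n k d := by
  have hk : 2 ≤ k := by nlinarith
  unfold IsLogFanoTriple
  rcases hd.eq_or_lt with rfl | hd
  · omega
  · have hk3 : k ≤ 3 := by nlinarith
    obtain rfl | rfl : k = 2 ∨ k = 3 := by omega
    · obtain rfl : d = 2 := by nlinarith
      omega
    · obtain rfl : d = 2 := by omega
      omega

theorem IsLogFanoTriple.exists_logFanoCoeffs {n k d : ℤ} (h : IsLogFanoTriple n k d) (hn : 4 ≤ n) :
    ∃ x y z w u, LogFanoCoeffs n k d x y z w u := by
  have hk : (2 : ℚ) ≤ k := by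
    exact_mod_cast (show 2 ≤ k by unfold IsLogFanoTriple at h; omega)
  obtain ⟨rfl, (rfl | rfl | rfl | rfl)⟩ | ⟨rfl, rfl, rfl⟩ | ⟨rfl, rfl, rfl⟩ | ⟨rfl, rfl, rfl⟩ := h
  · exact ⟨0, 3/4, 3/4, 0, 0, by norm_num [LogFanoCoeffs]; constructor <;> linarith⟩
  · exact ⟨0, 3/4, 3/4, 0, 0, by norm_num [LogFanoCoeffs]; constructor <;> linarith⟩
  · exact ⟨0, 0, 0, 0, 0, by norm_num [LogFanoCoeffs]; constructor <;> linarith⟩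
  · exact ⟨3/4, 0, 0, 0, 0, by norm_num [LogFanoCoeffs]; constructor <;> linarith⟩
  · exact ⟨3/4, 0, 0, 0, 0, by norm_num [LogFanoCoeffs]⟩
  · exact ⟨1/4, 3/4, 3/4, 0, 0, by norm_num [LogFanoCoeffs]⟩
  · exact ⟨1/2, 3/4, 0, 0, 0, by norm_num [LogFanoCoeffs]⟩

theorem stmt_2_general (n k d : ℤ) (hn : 4 ≤ n) (hd : 1 ≤ d) :
    (∃ x y z w u : ℚ,
      (0 ≤ x ∧ x < 1) ∧ (0 ≤ y ∧ y < 1) ∧ (0 ≤ z ∧ z < 1) ∧ (0 ≤ w ∧ w < 1) ∧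
      (0 ≤ u ∧ u < 1) ∧
      z - u < 1 ∧
      y - d * x + d * z < (k : ℚ) + 1 - ((n : ℚ) - k) * d ∧
      x - y - z + w < (n : ℚ) - 2 * k + 1 ∧
      y - w + u < (k : ℚ) - 1) ↔
    ((d = 1 ∧ (n = 2 * k - 2 ∨ n = 2 * k - 1 ∨ n = 2 * k ∨ n = 2 * k + 1)) ∨
      (n = 4 ∧ k = 2 ∧ d = 2) ∨ (n = 4 ∧ k = 3 ∧ d = 2) ∨ (n = 5 ∧ k = 3 ∧ d = 2)) := by
  show (∃ x y z w u, LogFanoCoeffs n k d x y z w u) ↔ IsLogFanoTriple n k d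
  refine ⟨fun ⟨x, y, z, w, u, h⟩ => isLogFanoTriple_of_bounds hn hd ?_ ?_ ?_,
    fun h => h.exists_logFanoCoeffs hn⟩
  · exact_mod_cast h.sub_sub_one_mul_lt_add_one (by exact_mod_cast (by omega : (0 : ℤ) ≤ d))
  · exact_mod_cast h.two_mul_sub_three_lt
  · exact_mod_cast h.sub_two_mul_lt (by exact_mod_cast hd)

theorem stmt_2 (n k d : ℤ) (hn : 4 ≤ n) (hk : 2 ≤ k) (hkn : k ≤ n - 1) (hd : 1 ≤ d) :
    (∃ x y z w u : ℚ,
      (0 ≤ x ∧ x < 1) ∧ (0 ≤ y ∧ y < 1) ∧ (0 ≤ z ∧ z < 1) ∧ (0 ≤ w ∧ w < 1) ∧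
      (0 ≤ u ∧ u < 1) ∧
      z - u < 1 ∧
      y - d * x + d * z < (k : ℚ) + 1 - ((n : ℚ) - k) * d ∧
      x - y - z + w < (n : ℚ) - 2 * k + 1 ∧
      y - w + u < (k : ℚ) - 1) ↔
    ((d = 1 ∧ (n = 2 * k - 2 ∨ n = 2 * k - 1 ∨ n = 2 * k ∨ n = 2 * k + 1)) ∨
      (n = 4 ∧ k = 2 ∧ d = 2) ∨ (n = 4 ∧ k = 3 ∧ d = 2) ∨ (n = 5 ∧ k = 3 ∧ d = 2)) :=
  stmt_2_general n k d hn hd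
end

section
/- Let $k \geq 2$ and $d \geq 2$ be integers, and suppose $n$ is an integer with $n \geq 4$ and $k \leq n-1$. If there exist rational numbers $x,y,z,w \in [0,1)$ with $y - dx + dz < k+1-(n-k)d$ and $x - y - z + w < n-2k+1$, then $k < 2 + \frac{2}{d-1}$; in particular $k \in \{2,3\}$ and if $k = 3$ then $d = 2$. -/
/-!
Adding the two inequalities, with `w ≥ 0`, eliminates `y` and gives
`(d - 1)(n - k) - 2 < (d - 1)(x - z)`, while the second one with `y < 1` and `w ≥ 0` gives
`x - z < n - 2k + 2`. Together they force `(d - 1)(k - 2) < 2`, and for integers `k, d ≥ 2`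
this leaves only `k = 2`, or `k = 3` with `d = 2`.
-/

section LinearOrderedField

variable {K : Type*} [Field K] [LinearOrder K] [IsStrictOrderedRing K]

theorem sub_one_mul_sub_two_lt_two {n k d x y z w : K} (hd : 1 < d) (hy : y < 1) (hw : 0 ≤ w)
    (h₁ : y - d * x + d * z < k + 1 - (n - k) * d) (h₂ : x - y - z + w < n - 2 * k + 1) :
    (d - 1) * (k - 2) < 2 := by
  have hlower : (d - 1) * (n - k) - 2 < (d - 1) * (x - z) := by linarith
  have hupper : x - z < n - 2 * k + 2 := by linarith
  have := mul_lt_mul_of_pos_left hupper (sub_pos.2 hd)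
  linarith

theorem lt_two_add_two_div_sub_one {k d : K} (hd : 1 < d) (h : (d - 1) * (k - 2) < 2) :
    k < 2 + 2 / (d - 1) := by
  have : k - 2 < 2 / (d - 1) := by
    rw [lt_div_iff₀ (sub_pos.2 hd)]
    linarith
  linarith

end LinearOrderedField

theorem Int.eq_two_or_eq_three_of_sub_one_mul_sub_two_lt_two {k d : ℤ} (hk : 2 ≤ k) (hd : 2 ≤ d)
    (h : (d - 1) * (k - 2) < 2) : (k = 2 ∨ k = 3) ∧ (k = 3 → d = 2) := by
  have hk4 : k < 4 := by nlinarith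
  refine ⟨by omega, fun hk3 => ?_⟩
  subst hk3
  omega

theorem stmt_3_general (n k d : ℤ) (hk : 2 ≤ k) (hd : 2 ≤ d)
    (h : ∃ x y z w : ℚ,
      (0 ≤ x ∧ x < 1) ∧ (0 ≤ y ∧ y < 1) ∧ (0 ≤ z ∧ z < 1) ∧ (0 ≤ w ∧ w < 1) ∧
      y - d * x + d * z < (k : ℚ) + 1 - ((n : ℚ) - k) * d ∧
      x - y - z + w < (n : ℚ) - 2 * k + 1) :
    (k : ℚ) < 2 + 2 / ((d : ℚ) - 1) ∧ (k = 2 ∨ k = 3) ∧ (k = 3 → d = 2) := by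
  obtain ⟨x, y, z, w, -, ⟨-, hy⟩, -, ⟨hw, -⟩, h₁, h₂⟩ := h
  have hdq : (1 : ℚ) < d := by exact_mod_cast hd
  have hq : ((d : ℚ) - 1) * ((k : ℚ) - 2) < 2 := sub_one_mul_sub_two_lt_two hdq hy hw h₁ h₂
  have hz : (d - 1) * (k - 2) < 2 := by exact_mod_cast hq
  exact ⟨lt_two_add_two_div_sub_one hdq hq,
    Int.eq_two_or_eq_three_of_sub_one_mul_sub_two_lt_two hk hd hz⟩

theorem stmt_3 (n k d : ℤ) (hn : 4 ≤ n) (hk : 2 ≤ k) (hd : 2 ≤ d) (hkn : k ≤ n - 1)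
    (h : ∃ x y z w : ℚ,
      (0 ≤ x ∧ x < 1) ∧ (0 ≤ y ∧ y < 1) ∧ (0 ≤ z ∧ z < 1) ∧ (0 ≤ w ∧ w < 1) ∧
      y - d * x + d * z < (k : ℚ) + 1 - ((n : ℚ) - k) * d ∧
      x - y - z + w < (n : ℚ) - 2 * k + 1) :
    (k : ℚ) < 2 + 2 / ((d : ℚ) - 1) ∧ (k = 2 ∨ k = 3) ∧ (k = 3 → d = 2) :=
  stmt_3_general n k d hk hd h
end
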